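/- arXiv:2203.10634 — 5 statements merged into one kernel-verified Lean document; each statement's English description precedes it below -/
import Mathlib

section
/- Let H be a complex Hilbert space and let T be a densely defined linear operator in H. Assume that TT* is densely defined and that there exists a complex number λ such that TT* − λI is boundedly invertible. Then TT* is self-adjoint, i.e., (TT*)* = TT*. -/
namespace LinearPMap

section Pcomp

variable {R E F G : Type*} [CommRing R]
  [AddCommGroup E] [Module R E]
  [AddCommGroup F] [Module R F]
  [AddCommGroup G] [Module R G]

/-- Composition of partially defined linear maps (unbounded operators), with the natural
domain `D(A ∘ B) = {x ∈ D(B) : B x ∈ D(A)}`, sending `x` to `A (B x)`. -/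
noncomputable def pcomp (A : F →ₗ.[R] G) (B : E →ₗ.[R] F) : E →ₗ.[R] G where
  domain := (A.domain.comap B.toFun).map B.domain.subtype
  toFun := A.toFun.comp <|
    (LinearMap.codRestrict A.domain
        (B.toFun.comp (A.domain.comap B.toFun).subtype) fun x => x.2).comp
      (Submodule.equivMapOfInjective B.domain.subtype
        (Submodule.injective_subtype _) (A.domain.comap B.toFun)).symm.toLinearMap

theorem mem_pcomp_domain {A : F →ₗ.[R] G} {B : E →ₗ.[R] F} {x : E} :
    x ∈ (A.pcomp B).domain ↔ ∃ hx : x ∈ B.domain, B ⟨x, hx⟩ ∈ A.domain := by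
  constructor
  · rintro ⟨y, hy, rfl⟩
    exact ⟨y.2, by simpa using hy⟩
  · rintro ⟨hx, hx'⟩
    exact ⟨⟨x, hx⟩, hx', rfl⟩

theorem pcomp_apply {A : F →ₗ.[R] G} {B : E →ₗ.[R] F} (x : (A.pcomp B).domain)
    (hx : (x : E) ∈ B.domain) (hx' : B ⟨(x : E), hx⟩ ∈ A.domain) :
    (A.pcomp B) x = A ⟨B ⟨(x : E), hx⟩, hx'⟩ := by
  set e := (Submodule.equivMapOfInjective B.domain.subtype
    (Submodule.injective_subtype _) (A.domain.comap B.toFun)) with he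
  have hy : (((e.symm x : _) : B.domain) : E) = (x : E) := by
    conv_rhs => rw [← e.apply_symm_apply x]
    rfl
  have h2 : ((e.symm x : _) : B.domain) = ⟨(x : E), hx⟩ := Subtype.ext hy
  show A.toFun _ = A.toFun _
  congr 1
  exact Subtype.ext (congrArg B.toFun h2)

end Pcomp

end LinearPMap

/-- `A - λ•I` is boundedly invertible: there is a bounded everywhere-defined operator `B`
on `H` with `B ((A - λ) x) = x` for all `x ∈ D(A)`, and for all `y ∈ H`, `B y ∈ D(A)` and
`(A - λ) (B y) = y`. -/
def IsBoundedlyInvertibleShift {H : Type*} [NormedAddCommGroup H] [InnerProductSpace ℂ H]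
    (A : H →ₗ.[ℂ] H) (lam : ℂ) : Prop :=
  ∃ B : H →L[ℂ] H,
    (∀ x : A.domain, B (A x - lam • (x : H)) = (x : H)) ∧
    (∀ y : H, ∃ hy : B y ∈ A.domain, A ⟨B y, hy⟩ - lam • B y = y)

open scoped LinearPMap

/-!
`TT*` is symmetric and nonnegative, because `⟪x, TT* y⟫ = ⟪T* x, T* y⟫`. For a nonnegative
operator `A` one has `‖(A - μ) x‖ ≥ d(μ) ‖x‖`, where `d(μ)` is the distance from `μ` to `[0, ∞)`,
so by a Neumann series bounded invertibility of `A - μ` persists on the disc of radius `d(μ)`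
around `μ`. As `ℂ \ [0, ∞)` is connected, invertibility at `λ` gives invertibility at `conj λ`
(trivially when `λ ≥ 0`, since then `conj λ = λ`). Finally, a symmetric operator `A` with
`A - λ` and `A - conj λ` both onto is self-adjoint: for `y ∈ D(A*)` pick `x ∈ D(A)` with
`(A - λ) x = (A* - λ) y`; then `y - x ∈ ker (A* - λ) = ran (A - conj λ)ᗮ = 0`.
-/

open scoped ComplexOrder InnerProductSpace
open Metric

lemma Complex.isPreconnected_compl_Ici_zero : IsPreconnected (Set.Ici (0 : ℂ))ᶜ := by
  have h : (Set.Ici (0 : ℂ))ᶜ = Neg.neg '' slitPlane := by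
    ext z
    simp [mem_slitPlane_iff_not_le_zero]
  rw [h]
  exact (starConvex_one_slitPlane.isPathConnected one_mem_slitPlane).isConnected.isPreconnected
    |>.image _ continuous_neg.continuousOn

namespace LinearPMap

lemma infDist_mul_norm_le_norm_sub_smul {H : Type*} [NormedAddCommGroup H]
    [InnerProductSpace ℂ H] {A : H →ₗ.[ℂ] H}
    (hA : ∀ x : A.domain, 0 ≤ ⟪(x : H), A x⟫_ℂ) (μ : ℂ) (x : A.domain) :
    infDist μ (Set.Ici 0) * ‖(x : H)‖ ≤ ‖A x - μ • (x : H)‖ := by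
  rcases eq_or_ne (x : H) 0 with hx | hx
  · simp [hx]
  have hr : 0 < ‖(x : H)‖ := norm_pos_iff.mpr hx
  have hr' : (‖(x : H)‖ : ℂ) ≠ 0 := by exact_mod_cast hr.ne'
  have hq : 0 ≤ ⟪(x : H), A x⟫_ℂ / (‖(x : H)‖ : ℂ) ^ 2 := div_nonneg (hA x) (by positivity)
  have hinner : ⟪(x : H), A x - μ • (x : H)⟫_ℂ
      = (‖(x : H)‖ : ℂ) ^ 2 * (⟪(x : H), A x⟫_ℂ / (‖(x : H)‖ : ℂ) ^ 2 - μ) := by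
    rw [inner_sub_right, inner_smul_right, inner_self_eq_norm_sq_to_K,
      RCLike.ofReal_eq_complex_ofReal]
    field_simp
  have hdist := infDist_le_dist_of_mem (x := μ) (Set.mem_Ici.mpr hq)
  rw [dist_eq_norm'] at hdist
  refine le_of_mul_le_mul_right ?_ hr
  calc infDist μ (Set.Ici 0) * ‖(x : H)‖ * ‖(x : H)‖
      ≤ ‖⟪(x : H), A x⟫_ℂ / (‖(x : H)‖ : ℂ) ^ 2 - μ‖ * ‖(x : H)‖ ^ 2 := by nlinarith
    _ = ‖⟪(x : H), A x - μ • (x : H)⟫_ℂ‖ := by rw [hinner, norm_mul]; simp [mul_comm]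
    _ ≤ ‖(x : H)‖ * ‖A x - μ • (x : H)‖ := norm_inner_le_norm _ _
    _ = ‖A x - μ • (x : H)‖ * ‖(x : H)‖ := mul_comm _ _

variable {𝕜 E F : Type*} [RCLike 𝕜] [NormedAddCommGroup E] [InnerProductSpace 𝕜 E]
  [NormedAddCommGroup F] [InnerProductSpace 𝕜 F] [CompleteSpace E]

theorem adjoint_eq_self_of_forall_exists_sub_smul_eq {A : E →ₗ.[𝕜] E}
    (hd : Dense (A.domain : Set E)) (hA : A.IsFormalAdjoint A) {μ : 𝕜}
    (h : ∀ y : E, ∃ x : A.domain, A x - μ • (x : E) = y)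
    (h' : ∀ y : E, ∃ x : A.domain, A x - starRingEnd 𝕜 μ • (x : E) = y) : A† = A := by
  have hle : A ≤ A† := hA.le_adjoint hd
  refine (eq_of_le_of_domain_eq hle (le_antisymm hle.1 fun y hy => ?_)).symm
  obtain ⟨x, hx⟩ := h (A† ⟨y, hy⟩ - μ • y)
  have hker : A† ⟨y, hy⟩ - A x = μ • (y - x) := by
    linear_combination (norm := module) hx.symm
  have horth : ∀ w : A.domain, ⟪y - (x : E), A w - starRingEnd 𝕜 μ • (w : E)⟫_𝕜 = 0 := by
    intro w
    have h₁ : ⟪y, A w⟫_𝕜 = ⟪A† ⟨y, hy⟩, w⟫_𝕜 := (adjoint_isFormalAdjoint hd ⟨y, hy⟩ w).symm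
    have h₂ : ⟪(x : E), A w⟫_𝕜 = ⟪A x, w⟫_𝕜 := (hA x w).symm
    rw [inner_sub_right, inner_sub_left, h₁, h₂, ← inner_sub_left, hker, inner_smul_left,
      inner_smul_right, sub_self]
  obtain ⟨w, hw⟩ := h' (y - x)
  have hyx : y - x = 0 := inner_self_eq_zero.mp (hw ▸ horth w)
  exact sub_eq_zero.mp hyx ▸ x.2

lemma inner_pcomp_adjoint_apply {T : E →ₗ.[𝕜] F} (hT : Dense (T.domain : Set E))
    (x : T†.domain) (y : (T.pcomp T†).domain) (hy : (y : F) ∈ T†.domain) :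
    ⟪(x : F), T.pcomp T† y⟫_𝕜 = ⟪T† x, T† ⟨y, hy⟩⟫_𝕜 := by
  obtain ⟨_, hy'⟩ := mem_pcomp_domain.mp y.2
  rw [pcomp_apply y hy hy']
  exact (adjoint_isFormalAdjoint hT x ⟨_, hy'⟩).symm

lemma isFormalAdjoint_pcomp_adjoint {T : E →ₗ.[𝕜] F} (hT : Dense (T.domain : Set E)) :
    (T.pcomp T†).IsFormalAdjoint (T.pcomp T†) := fun x y => by
  obtain ⟨hx, -⟩ := mem_pcomp_domain.mp x.2
  obtain ⟨hy, -⟩ := mem_pcomp_domain.mp y.2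
  rw [← inner_conj_symm, inner_pcomp_adjoint_apply hT ⟨y, hy⟩ x hx, inner_conj_symm,
    inner_pcomp_adjoint_apply hT ⟨x, hx⟩ y hy]

lemma inner_pcomp_adjoint_self_nonneg {T : E →ₗ.[𝕜] F} (hT : Dense (T.domain : Set E))
    (x : (T.pcomp T†).domain) : 0 ≤ ⟪(x : F), T.pcomp T† x⟫_𝕜 := by
  obtain ⟨hx, -⟩ := mem_pcomp_domain.mp x.2
  rw [inner_pcomp_adjoint_apply hT ⟨x, hx⟩ x hx, inner_self_eq_norm_sq_to_K, ← RCLike.ofReal_pow,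
    RCLike.ofReal_nonneg]
  positivity

end LinearPMap

namespace IsBoundedlyInvertibleShift

variable {H : Type*} [NormedAddCommGroup H] [InnerProductSpace ℂ H] {A : H →ₗ.[ℂ] H}

lemma surjective {μ : ℂ} (h : IsBoundedlyInvertibleShift A μ) (y : H) :
    ∃ x : A.domain, A x - μ • (x : H) = y :=
  let ⟨B, _, hAB⟩ := h
  let ⟨hy, hy'⟩ := hAB y
  ⟨⟨B y, hy⟩, hy'⟩

variable [CompleteSpace H]

lemma of_norm_sub_lt {μ μ' : ℂ} {c : ℝ}
    (hA : ∀ x : A.domain, c * ‖(x : H)‖ ≤ ‖A x - μ • (x : H)‖)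
    (h : IsBoundedlyInvertibleShift A μ) (hμ : ‖μ' - μ‖ < c) :
    IsBoundedlyInvertibleShift A μ' := by
  obtain ⟨B, hBA, hAB⟩ := h
  have hc : 0 < c := (norm_nonneg _).trans_lt hμ
  have hB : ‖B‖ ≤ c⁻¹ := B.opNorm_le_bound (inv_nonneg.2 hc.le) fun y => by
    obtain ⟨hy, hy'⟩ := hAB y
    have := hA ⟨B y, hy⟩
    rw [hy'] at this
    rwa [inv_mul_eq_div, le_div_iff₀' hc]
  -- `(A - μ') B = 1 - S` and `B (A - μ') = 1 - S` on `D(A)`, with `‖S‖ < 1`.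
  set S : H →L[ℂ] H := (μ' - μ) • B
  have hS : ‖S‖ < 1 := calc
    ‖S‖ = ‖μ' - μ‖ * ‖B‖ := norm_smul _ _
    _ ≤ ‖μ' - μ‖ * c⁻¹ := by gcongr
    _ < c * c⁻¹ := by gcongr
    _ = 1 := mul_inv_cancel₀ hc.ne'
  set u := Units.oneSub S hS
  set C : H →L[ℂ] H := ↑u⁻¹
  have hBC : Commute B C :=
    ((Commute.one_right B).sub_right ((Commute.refl B).smul_right _)).units_inv_right
  refine ⟨B * C, fun x => ?_, fun y => ?_⟩
  · have : B (A x - μ' • (x : H)) = (u : H →L[ℂ] H) x := by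
      rw [show A x - μ' • (x : H) = (A x - μ • (x : H)) - (μ' - μ) • (x : H) by module,
        map_sub, hBA, map_smul]
      rfl
    rw [hBC.eq, mul_apply_eq_comp, this, ← mul_apply_eq_comp, Units.inv_mul, one_apply_eq_self]
  · obtain ⟨hy, hy'⟩ := hAB (C y)
    refine ⟨hy, ?_⟩
    calc A ⟨_, hy⟩ - μ' • B (C y)
        = (A ⟨_, hy⟩ - μ • B (C y)) - S (C y) := by
          simp only [S, FunLike.coe_smul, Pi.smul_apply]
          module
      _ = ((u : H →L[ℂ] H) * C) y := by rw [hy']; rfl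
      _ = y := by rw [Units.mul_inv, one_apply_eq_self]

lemma of_dist_lt_infDist (hA : ∀ x : A.domain, 0 ≤ ⟪(x : H), A x⟫_ℂ) {μ μ' : ℂ}
    (h : IsBoundedlyInvertibleShift A μ) (hμ : dist μ' μ < infDist μ (Set.Ici 0)) :
    IsBoundedlyInvertibleShift A μ' :=
  h.of_norm_sub_lt (LinearPMap.infDist_mul_norm_le_norm_sub_smul hA μ) (by rwa [← dist_eq_norm])

lemma of_not_nonneg (hA : ∀ x : A.domain, 0 ≤ ⟪(x : H), A x⟫_ℂ) {μ μ' : ℂ}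
    (hμ : ¬0 ≤ μ) (hμ' : ¬0 ≤ μ') (h : IsBoundedlyInvertibleShift A μ) :
    IsBoundedlyInvertibleShift A μ' := by
  refine Complex.isPreconnected_compl_Ici_zero.induction₂'
    (fun a b => IsBoundedlyInvertibleShift A a → IsBoundedlyInvertibleShift A b)
    (fun ν hν => ?_) (fun _ _ _ _ _ _ h₁ h₂ => h₂ ∘ h₁) hμ hμ' h
  have hd : 0 < infDist ν (Set.Ici 0) := (isClosed_Ici.notMem_iff_infDist_pos ⟨0, le_rfl⟩).mp hν
  -- Within `d(ν)/2` of `ν` the distance to `[0, ∞)` exceeds `d(ν)/2`, so both directions apply.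
  filter_upwards [nhdsWithin_le_nhds (ball_mem_nhds ν (half_pos hd))] with ν' hν'
  rw [mem_ball] at hν'
  refine ⟨fun h => h.of_dist_lt_infDist hA (by linarith), fun h => h.of_dist_lt_infDist hA ?_⟩
  have := infDist_le_infDist_add_dist (x := ν) (y := ν') (s := Set.Ici 0)
  rw [dist_comm] at hν'
  linarith

lemma conj (hA : ∀ x : A.domain, 0 ≤ ⟪(x : H), A x⟫_ℂ) {μ : ℂ}
    (h : IsBoundedlyInvertibleShift A μ) : IsBoundedlyInvertibleShift A (starRingEnd ℂ μ) := by
  by_cases hμ : 0 ≤ μ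
  · rwa [Complex.conj_eq_iff_im.mpr hμ.2.symm]
  · exact h.of_not_nonneg hA hμ (by rwa [starRingEnd_apply, star_nonneg_iff])

end IsBoundedlyInvertibleShift

theorem stmt_1 {H : Type*} [NormedAddCommGroup H] [InnerProductSpace ℂ H] [CompleteSpace H]
    (T : H →ₗ.[ℂ] H)
    (hT : Dense (T.domain : Set H))
    (hdense : Dense (((T.pcomp T.adjoint).domain : Set H)))
    (hinv : ∃ lam : ℂ, IsBoundedlyInvertibleShift (T.pcomp T.adjoint) lam) :
    (T.pcomp T.adjoint).adjoint = T.pcomp T.adjoint := by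
  obtain ⟨lam, hlam⟩ := hinv
  have hnonneg := LinearPMap.inner_pcomp_adjoint_self_nonneg hT
  exact LinearPMap.adjoint_eq_self_of_forall_exists_sub_smul_eq hdense
    (LinearPMap.isFormalAdjoint_pcomp_adjoint hT) hlam.surjective (hlam.conj hnonneg).surjective
end

section
/- Let H be a complex Hilbert space and let T be a densely defined linear operator in H. Assume that TT* is densely defined and that there exists a complex number λ such that TT* − λI is boundedly invertible. Then TT* = T̄T*, where T̄ denotes the closure of T; that is, the domains D(TT*) and D(T̄T*) coincide and the two operators agree there. -/
open scoped LinearPMap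

local notation "⟪" x ", " y "⟫" => @inner ℂ _ _ x y

section Aux

variable {R E F G : Type*} [CommRing R]
  [AddCommGroup E] [Module R E]
  [AddCommGroup F] [Module R F]
  [AddCommGroup G] [Module R G]

theorem pcomp_le_pcomp {A A' : F →ₗ.[R] G} (B : E →ₗ.[R] F) (h : A ≤ A') :
    A.pcomp B ≤ A'.pcomp B := by
  constructor
  · intro x hx
    rw [LinearPMap.mem_pcomp_domain] at hx ⊢
    obtain ⟨hx1, hx2⟩ := hx
    exact ⟨hx1, h.1 hx2⟩
  · rintro x y hxy
    obtain ⟨hx1, hx2⟩ := LinearPMap.mem_pcomp_domain.mp x.2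
    have hy1 : (y : E) ∈ B.domain := hxy ▸ hx1
    have hBeq : B ⟨(y : E), hy1⟩ = B ⟨(x : E), hx1⟩ := by
      congr 1
      exact Subtype.ext hxy.symm
    have hy2 : B ⟨(y : E), hy1⟩ ∈ A'.domain := by
      rw [hBeq]; exact h.1 hx2
    rw [LinearPMap.pcomp_apply x hx1 hx2, LinearPMap.pcomp_apply y hy1 hy2]
    exact h.2 hBeq.symm

end Aux

section AuxH

variable {H : Type*} [NormedAddCommGroup H] [InnerProductSpace ℂ H] [CompleteSpace H]

theorem closure_inner_adjoint (T : H →ₗ.[ℂ] H) (hT : Dense (T.domain : Set H))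
    (v : T.closure.domain) (w : T.adjoint.domain) :
    ⟪(T.closure v : H), (w : H)⟫ = ⟪(v : H), (T.adjoint w : H)⟫ := by
  have hgraph : (T.graph : Set (H × H)) ⊆
      {p : H × H | ⟪p.2, (w : H)⟫ = ⟪p.1, (T.adjoint w : H)⟫} := by
    intro p hp
    obtain ⟨y, hy1, hy2⟩ := T.mem_graph_iff.mp hp
    have h := (T.adjoint_isFormalAdjoint hT) w y
    show ⟪p.2, (w : H)⟫ = ⟪p.1, (T.adjoint w : H)⟫
    rw [← hy1, ← hy2, ← inner_conj_symm, ← h, inner_conj_symm]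
  have hclosed : IsClosed {p : H × H | ⟪p.2, (w : H)⟫ = ⟪p.1, (T.adjoint w : H)⟫} :=
    isClosed_eq (continuous_snd.inner continuous_const)
      (continuous_fst.inner continuous_const)
  have hsub : (T.closure.graph : Set (H × H)) ⊆ closure (T.graph : Set (H × H)) := by
    by_cases hc : T.IsClosable
    · rw [← hc.graph_closure_eq_closure_graph, Submodule.topologicalClosure_coe]
    · rw [LinearPMap.closure_def' hc]
      exact subset_closure
  have hmem : ((v : H), T.closure v) ∈ T.closure.graph := T.closure.mem_graph v
  exact closure_minimal hgraph hclosed (hsub hmem)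

end AuxH

theorem stmt_2 {H : Type*} [NormedAddCommGroup H] [InnerProductSpace ℂ H] [CompleteSpace H]
    (T : H →ₗ.[ℂ] H)
    (hT : Dense (T.domain : Set H))
    (hdense : Dense (((T.pcomp T.adjoint).domain : Set H)))
    (hinv : ∃ lam : ℂ, IsBoundedlyInvertibleShift (T.pcomp T.adjoint) lam) :
    T.pcomp T.adjoint = T.closure.pcomp T.adjoint := by
  classical
  obtain ⟨lam, B, hB1, hB2⟩ := hinv
  set S := T.pcomp T.adjoint with hS
  set S' := T.closure.pcomp T.adjoint with hS'
  have hle : S ≤ S' := pcomp_le_pcomp _ T.le_closure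
  -- Any eigenvector of S' with eigenvalue lam is zero
  have hker : ∀ u : S'.domain, S' u = lam • (u : H) → (u : H) = 0 := by
    intro u hu
    obtain ⟨h1, h2⟩ := LinearPMap.mem_pcomp_domain.mp u.2
    have happ : S' u = T.closure ⟨T.adjoint ⟨(u : H), h1⟩, h2⟩ :=
      LinearPMap.pcomp_apply u h1 h2
    have e1 : ⟪S' u, (u : H)⟫ =
        ⟪(T.adjoint ⟨(u : H), h1⟩ : H), (T.adjoint ⟨(u : H), h1⟩ : H)⟫ := by
      rw [happ]
      exact closure_inner_adjoint T hT ⟨_, h2⟩ ⟨(u : H), h1⟩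
    rw [hu, inner_smul_left] at e1
    by_contra hne
    -- lam is real
    have hu2 : ⟪(u : H), (u : H)⟫ = ((‖(u : H)‖ : ℂ)) ^ 2 := inner_self_eq_norm_sq_to_K _
    have hTu2 : ⟪(T.adjoint ⟨(u : H), h1⟩ : H), (T.adjoint ⟨(u : H), h1⟩ : H)⟫
        = ((‖(T.adjoint ⟨(u : H), h1⟩ : H)‖ : ℂ)) ^ 2 := inner_self_eq_norm_sq_to_K _
    rw [hu2, hTu2] at e1
    have hunorm : (‖(u : H)‖ : ℂ) ≠ 0 := by
      simpa using hne
    have hlamconj : (starRingEnd ℂ) lam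
        = ((‖(T.adjoint ⟨(u : H), h1⟩ : H)‖ : ℂ)) ^ 2 / ((‖(u : H)‖ : ℂ)) ^ 2 := by
      field_simp at e1 ⊢
      linear_combination e1
    have hreal : (starRingEnd ℂ) lam = lam := by
      have : (starRingEnd ℂ) ((starRingEnd ℂ) lam) = (starRingEnd ℂ) lam := by
        rw [hlamconj]
        simp [← Complex.ofReal_pow]
      simpa using this.symm
    -- use surjectivity applied to u
    obtain ⟨hBu, hBu'⟩ := hB2 (u : H)
    obtain ⟨k1, k2⟩ := LinearPMap.mem_pcomp_domain.mp hBu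
    have happ2 : S ⟨B (u : H), hBu⟩ = T ⟨T.adjoint ⟨B (u : H), k1⟩, k2⟩ :=
      LinearPMap.pcomp_apply _ k1 k2
    have e2 : ⟪(u : H), S ⟨B (u : H), hBu⟩⟫
        = ⟪(T.adjoint ⟨(u : H), h1⟩ : H), (T.adjoint ⟨B (u : H), k1⟩ : H)⟫ := by
      rw [happ2]
      exact ((T.adjoint_isFormalAdjoint hT) ⟨(u : H), h1⟩ ⟨_, k2⟩).symm
    have e3 : ⟪(T.adjoint ⟨(u : H), h1⟩ : H), (T.adjoint ⟨B (u : H), k1⟩ : H)⟫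
        = ⟪(T.closure ⟨T.adjoint ⟨(u : H), h1⟩, h2⟩ : H), B (u : H)⟫ :=
      (closure_inner_adjoint T hT ⟨_, h2⟩ ⟨B (u : H), k1⟩).symm
    have e4 : (T.closure ⟨T.adjoint ⟨(u : H), h1⟩, h2⟩ : H) = lam • (u : H) :=
      happ.symm.trans hu
    have hzero : ⟪(u : H), (u : H)⟫ = 0 := by
      calc ⟪(u : H), (u : H)⟫
          = ⟪(u : H), S ⟨B (u : H), hBu⟩ - lam • B (u : H)⟫ := by rw [hBu']
        _ = ⟪(u : H), S ⟨B (u : H), hBu⟩⟫ - lam * ⟪(u : H), B (u : H)⟫ := by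
            rw [inner_sub_right, inner_smul_right]
        _ = ⟪lam • (u : H), B (u : H)⟫ - lam * ⟪(u : H), B (u : H)⟫ := by
            rw [e2, e3, e4]
        _ = 0 := by rw [inner_smul_left, hreal]; ring
    exact hne (inner_self_eq_zero.mp hzero)
  -- domain inclusion
  have hdom : S'.domain ≤ S.domain := by
    intro y hy
    set yv : S'.domain := ⟨y, hy⟩ with hyv
    obtain ⟨hx, hx'⟩ := hB2 (S' yv - lam • y)
    set x := B (S' yv - lam • y) with hxdef
    have hxS' : x ∈ S'.domain := hle.1 hx
    set uv : S'.domain := ⟨y - x, sub_mem hy hxS'⟩ with huv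
    have hSu : S' uv = lam • ((uv : H)) := by
      have hxval : S' ⟨x, hxS'⟩ = S ⟨x, hx⟩ := (hle.2 rfl).symm
      have hsplit : uv = yv - ⟨x, hxS'⟩ := by
        apply Subtype.ext
        simp [huv, hyv]
      have hxeq : S ⟨x, hx⟩ = S' yv - lam • y + lam • x := by
        rw [← hx']; abel
      rw [hsplit, S'.map_sub, hxval, hxeq]
      have hcoe : ((yv - ⟨x, hxS'⟩ : S'.domain) : H) = y - x := rfl
      rw [hcoe]
      show S' yv - (S' yv - lam • y + lam • x) = lam • (y - x)
      rw [smul_sub]; abel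
    have h0 := hker uv hSu
    have hyx : y = x := sub_eq_zero.mp h0
    rw [hyx]; exact hx
  exact le_antisymm hle ⟨hdom, fun x y hxy => (hle.2 hxy.symm).symm⟩
end

section
/- Let H be a complex Hilbert space and let T be a densely defined linear operator in H. Assume that T*T is densely defined and that there exists a complex number λ such that T*T − λI is boundedly invertible. Then T*T is self-adjoint, i.e., (T*T)* = T*T. -/
open scoped LinearPMap
open scoped ComplexOrder InnerProductSpace

/-!
`S = T†T` is symmetric and nonnegative, so `‖(S - μ) x‖ ≥ dist(μ, [0, ∞)) ‖x‖` on its domain.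
By a Neumann series the set of `μ` with `S - μ` boundedly invertible is open, and this lower
bound, which controls the norm of the inverse, makes it relatively closed in the connected set
`ℂ \ [0, ∞)`. Hence `S - conj λ` is boundedly invertible along with `S - λ` (trivially if `λ ≥ 0`),
and a symmetric operator with `S - λ` and `S - conj λ` both surjective is self-adjoint: an element of `D(S†)`
differs from one of `D(S)` by an element of `ker (S† - conj λ) = ran (S - λ)ᗮ = 0`.
Here `{z : ℂ | 0 ≤ z}` is `[0, ∞)`, for the order of `ComplexOrder`.
-/

section BoundedlyInvertibleShift

variable {H : Type*} [NormedAddCommGroup H] [InnerProductSpace ℂ H]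

theorem IsBoundedlyInvertibleShift.surjective_s4 {A : H →ₗ.[ℂ] H} {lam : ℂ}
    (h : IsBoundedlyInvertibleShift A lam) :
    Function.Surjective fun x : A.domain => A x - lam • (x : H) := by
  obtain ⟨B, -, hB⟩ := h
  intro y
  obtain ⟨hy, hBy⟩ := hB y
  exact ⟨⟨B y, hy⟩, hBy⟩

/-- Neumann series: on `D(A)`, `A - μ = (1 - (μ - λ) B) (A - λ)` for the inverse `B` of `A - λ`. -/
theorem isBoundedlyInvertibleShift_of_norm_sub_mul_lt [CompleteSpace H] {A : H →ₗ.[ℂ] H}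
    {lam mu : ℂ} {B : H →L[ℂ] H}
    (hB : (∀ x : A.domain, B (A x - lam • (x : H)) = x) ∧
      ∀ y : H, ∃ hy : B y ∈ A.domain, A ⟨B y, hy⟩ - lam • B y = y)
    (h : ‖mu - lam‖ * ‖B‖ < 1) : IsBoundedlyInvertibleShift A mu := by
  obtain ⟨hB1, hB2⟩ := hB
  set k := mu - lam
  have hkB : ‖k • B‖ < 1 := by rwa [norm_smul]
  set U := ContinuousLinearEquiv.unitsEquiv ℂ H (Units.oneSub (k • B) hkB)
  have hU : ∀ v, U v = v - k • B v := fun _ => rfl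
  have hshift : ∀ x : A.domain, A x - mu • (x : H) = U (A x - lam • (x : H)) := by
    intro x
    rw [hU, hB1, show mu = lam + k by ring, add_smul]
    abel
  refine ⟨B ∘L (U.symm : H →L[ℂ] H), fun x => ?_, fun y => ?_⟩
  · simp only [ContinuousLinearMap.comp_apply, ContinuousLinearEquiv.coe_coe, hshift,
      U.symm_apply_apply, hB1]
  · obtain ⟨hy, hBy⟩ := hB2 (U.symm y)
    refine ⟨hy, ?_⟩
    simp only [ContinuousLinearMap.comp_apply, ContinuousLinearEquiv.coe_coe] at hy ⊢
    calc A ⟨B (U.symm y), hy⟩ - mu • B (U.symm y)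
        = (A ⟨B (U.symm y), hy⟩ - lam • B (U.symm y)) - k • B (U.symm y) := by
          rw [show mu = lam + k by ring, add_smul]; abel
      _ = y := by rw [hBy, ← hU, U.apply_symm_apply]

theorem isOpen_setOf_isBoundedlyInvertibleShift [CompleteSpace H] (A : H →ₗ.[ℂ] H) :
    IsOpen {mu : ℂ | IsBoundedlyInvertibleShift A mu} := by
  refine Metric.isOpen_iff.mpr fun lam ⟨B, hB⟩ => ⟨(‖B‖ + 1)⁻¹, by positivity, fun mu hmu => ?_⟩
  refine isBoundedlyInvertibleShift_of_norm_sub_mul_lt hB ?_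
  rw [Metric.mem_ball, dist_eq_norm] at hmu
  calc ‖mu - lam‖ * ‖B‖ ≤ ‖mu - lam‖ * (‖B‖ + 1) := by gcongr; linarith
    _ < (‖B‖ + 1)⁻¹ * (‖B‖ + 1) := by gcongr
    _ = 1 := inv_mul_cancel₀ (by positivity)

theorem opNorm_le_inv_of_le_norm_sub_smul {A : H →ₗ.[ℂ] H} {mu : ℂ} {B : H →L[ℂ] H} {b : ℝ}
    (hb : 0 < b) (hlow : ∀ x : A.domain, b * ‖(x : H)‖ ≤ ‖A x - mu • (x : H)‖)
    (hB : ∀ y : H, ∃ hy : B y ∈ A.domain, A ⟨B y, hy⟩ - mu • B y = y) : ‖B‖ ≤ b⁻¹ := by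
  refine ContinuousLinearMap.opNorm_le_bound _ (by positivity) fun y => ?_
  obtain ⟨hy, hBy⟩ := hB y
  have := hlow ⟨B y, hy⟩
  rw [hBy] at this
  rw [inv_mul_eq_div, le_div_iff₀ hb, mul_comm]
  exact this

theorem infDist_mul_norm_le_norm_sub_smul {A : H →ₗ.[ℂ] H}
    (hpos : ∀ x : A.domain, 0 ≤ ⟪(x : H), A x⟫_ℂ) (mu : ℂ) (x : A.domain) :
    Metric.infDist mu {z : ℂ | 0 ≤ z} * ‖(x : H)‖ ≤ ‖A x - mu • (x : H)‖ := by
  rcases (norm_nonneg (x : H)).eq_or_lt with hs | hs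
  · rw [← hs, mul_zero]
    exact norm_nonneg _
  set s := ‖(x : H)‖
  set r := ⟪(x : H), A x⟫_ℂ
  have hs2 : ((s ^ 2 : ℝ) : ℂ) ≠ 0 := by exact_mod_cast (pow_pos hs 2).ne'
  have hinner : ⟪(x : H), A x - mu • (x : H)⟫_ℂ = (r / (s ^ 2 : ℝ) - mu) * (s ^ 2 : ℝ) := by
    rw [inner_sub_right, inner_smul_right, inner_self_eq_norm_sq_to_K, sub_mul,
      div_mul_cancel₀ _ hs2]
    push_cast
    rfl
  have hmem : r / (s ^ 2 : ℝ) ∈ {z : ℂ | 0 ≤ z} :=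
    div_nonneg (hpos x) (by exact_mod_cast (pow_pos hs 2).le)
  have hdist := Metric.infDist_le_dist_of_mem (x := mu) hmem
  rw [dist_comm, dist_eq_norm] at hdist
  refine le_of_mul_le_mul_right ?_ hs
  calc Metric.infDist mu {z : ℂ | 0 ≤ z} * s * s
      ≤ ‖r / (s ^ 2 : ℝ) - mu‖ * s ^ 2 := by rw [mul_assoc, ← sq]; gcongr
    _ = ‖⟪(x : H), A x - mu • (x : H)⟫_ℂ‖ := by
      rw [hinner, norm_mul, Complex.norm_real, Real.norm_of_nonneg (by positivity)]
    _ ≤ ‖A x - mu • (x : H)‖ * s := by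
      rw [mul_comm]; exact norm_inner_le_norm _ _

theorem isPreconnected_compl_setOf_nonneg : IsPreconnected {z : ℂ | 0 ≤ z}ᶜ := by
  have : {z : ℂ | 0 ≤ z}ᶜ = Homeomorph.neg ℂ ⁻¹' Complex.slitPlane := by
    ext z
    simp [Complex.mem_slitPlane_iff_not_le_zero]
  rw [this, Homeomorph.isPreconnected_preimage]
  exact (Complex.starConvex_one_slitPlane.isPathConnected Complex.one_mem_slitPlane)
    |>.isConnected.isPreconnected

theorem IsBoundedlyInvertibleShift.of_not_nonneg_s4 [CompleteSpace H] {A : H →ₗ.[ℂ] H}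
    (hpos : ∀ x : A.domain, 0 ≤ ⟪(x : H), A x⟫_ℂ) {lam mu : ℂ}
    (hlam : IsBoundedlyInvertibleShift A lam) (hlam0 : ¬0 ≤ lam) (hmu0 : ¬0 ≤ mu) :
    IsBoundedlyInvertibleShift A mu := by
  set K := {z : ℂ | 0 ≤ z}
  have hK : IsClosed K := isClosed_Ici
  have hKne : K.Nonempty := ⟨0, le_refl (0 : ℂ)⟩
  refine isPreconnected_compl_setOf_nonneg.subset_of_closure_inter_subset
    (isOpen_setOf_isBoundedlyInvertibleShift A) ⟨lam, hlam0, hlam⟩ ?_ hmu0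
  rintro mu ⟨hclos, hmu⟩
  have hd : 0 < Metric.infDist mu K := (hK.notMem_iff_infDist_pos hKne).mp hmu
  obtain ⟨nu, ⟨B, hB1, hB2⟩, hnu⟩ := Metric.mem_closure_iff.mp hclos _ (half_pos hd)
  have hdnu : Metric.infDist mu K / 2 < Metric.infDist nu K := by
    have := Metric.infDist_le_infDist_add_dist (s := K) (x := mu) (y := nu)
    linarith
  have hBnorm := opNorm_le_inv_of_le_norm_sub_smul (by linarith)
    (infDist_mul_norm_le_norm_sub_smul hpos nu) hB2
  refine isBoundedlyInvertibleShift_of_norm_sub_mul_lt ⟨hB1, hB2⟩ ?_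
  rw [← dist_eq_norm]
  calc dist mu nu * ‖B‖ ≤ dist mu nu * (Metric.infDist nu K)⁻¹ := by gcongr
    _ < 1 := by
      rw [← div_eq_mul_inv, div_lt_one (by linarith)]
      linarith

end BoundedlyInvertibleShift

namespace LinearPMap

variable {H : Type*} [NormedAddCommGroup H] [InnerProductSpace ℂ H] [CompleteSpace H]

theorem eq_zero_of_adjoint_apply_eq_smul {A : H →ₗ.[ℂ] H} (hA : Dense (A.domain : Set H))
    {lam : ℂ} (hlam : Function.Surjective fun x : A.domain => A x - lam • (x : H))
    (w : A†.domain) (hw : A† w = starRingEnd ℂ lam • (w : H)) : (w : H) = 0 := by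
  refine ext_inner_right ℂ fun v => ?_
  obtain ⟨x, rfl⟩ := hlam v
  rw [inner_zero_left, inner_sub_right, inner_smul_right, ← adjoint_isFormalAdjoint hA w x, hw,
    inner_smul_left, Complex.conj_conj, sub_self]

theorem adjoint_eq_self_of_surjective {A : H →ₗ.[ℂ] H} (hA : Dense (A.domain : Set H))
    (hsym : A.IsFormalAdjoint A) {lam : ℂ}
    (hlam : Function.Surjective fun x : A.domain => A x - lam • (x : H))
    (hconj : Function.Surjective fun x : A.domain => A x - starRingEnd ℂ lam • (x : H)) :
    A† = A := by
  have hle : A ≤ A† := hsym.le_adjoint hA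
  refine (eq_of_le_of_domain_eq hle (le_antisymm hle.1 fun y hy => ?_)).symm
  obtain ⟨x, hx⟩ := hconj (A† ⟨y, hy⟩ - starRingEnd ℂ lam • y)
  have hAx : A† ⟨x, hle.1 x.2⟩ = A x := (hle.2 rfl).symm
  have hxy : ((⟨x, hle.1 x.2⟩ - ⟨y, hy⟩ : A†.domain) : H) = 0 := by
    refine eq_zero_of_adjoint_apply_eq_smul hA hlam _ ?_
    simp only [map_sub, hAx, Submodule.coe_sub, smul_sub]
    rw [sub_eq_sub_iff_sub_eq_sub]
    exact hx
  have hxy_eq : (x : H) = y := by simpa [sub_eq_zero] using hxy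
  exact hxy_eq ▸ x.2

variable {T : H →ₗ.[ℂ] H}

theorem isFormalAdjoint_adjoint_pcomp_self (hT : Dense (T.domain : Set H)) :
    (T†.pcomp T).IsFormalAdjoint (T†.pcomp T) := by
  intro x y
  obtain ⟨hx, hx'⟩ := mem_pcomp_domain.mp x.2
  obtain ⟨hy, hy'⟩ := mem_pcomp_domain.mp y.2
  rw [pcomp_apply x hx hx', pcomp_apply y hy hy', ← inner_conj_symm (x : H)]
  exact (adjoint_isFormalAdjoint hT ⟨_, hx'⟩ ⟨_, hy⟩).trans <| (inner_conj_symm _ _).symm.trans <|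
    congrArg _ (adjoint_isFormalAdjoint hT ⟨_, hy'⟩ ⟨_, hx⟩).symm

theorem inner_adjoint_pcomp_self_nonneg (hT : Dense (T.domain : Set H))
    (x : (T†.pcomp T).domain) : 0 ≤ ⟪(x : H), (T†.pcomp T) x⟫_ℂ := by
  obtain ⟨hx, hx'⟩ := mem_pcomp_domain.mp x.2
  rw [pcomp_apply x hx hx', ← inner_conj_symm, adjoint_isFormalAdjoint hT ⟨_, hx'⟩ ⟨_, hx⟩,
    inner_conj_symm, inner_self_eq_norm_sq_to_K]
  norm_cast
  positivity

end LinearPMap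

theorem stmt_4_general {H : Type*} [NormedAddCommGroup H] [InnerProductSpace ℂ H] [CompleteSpace H]
    (T : H →ₗ.[ℂ] H)
    (hT : Dense (T.domain : Set H))
    (hdense : Dense (((T.adjoint.pcomp T).domain : Set H)))
    (hinv : ∃ lam : ℂ, IsBoundedlyInvertibleShift (T.adjoint.pcomp T) lam) :
    (T.adjoint.pcomp T).adjoint = T.adjoint.pcomp T := by
  obtain ⟨lam, hlam⟩ := hinv
  have hpos := LinearPMap.inner_adjoint_pcomp_self_nonneg hT
  have hconj : IsBoundedlyInvertibleShift (T.adjoint.pcomp T) (starRingEnd ℂ lam) := by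
    by_cases h : 0 ≤ lam
    · rwa [Complex.conj_eq_iff_im.mpr (Complex.nonneg_iff.mp h).2.symm]
    · refine hlam.of_not_nonneg_s4 hpos h ?_
      rwa [starRingEnd_apply, star_nonneg_iff]
  exact LinearPMap.adjoint_eq_self_of_surjective hdense
    (LinearPMap.isFormalAdjoint_adjoint_pcomp_self hT) hlam.surjective_s4 hconj.surjective_s4

theorem stmt_4 {H : Type*} [NormedAddCommGroup H] [InnerProductSpace ℂ H] [CompleteSpace H]
    (T : H →ₗ.[ℂ] H)
    (hT : Dense (T.domain : Set H))
    (hcl : T.IsClosable)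
    (hdense : Dense (((T.adjoint.pcomp T).domain : Set H)))
    (hinv : ∃ lam : ℂ, IsBoundedlyInvertibleShift (T.adjoint.pcomp T) lam) :
    (T.adjoint.pcomp T).adjoint = T.adjoint.pcomp T :=
  stmt_4_general T hT hdense hinv
end

section
/- Let E and F be complex Hilbert spaces and let T be a densely defined closable linear operator from E to F with closure T̄. Define the block operator S in E × F with domain D(S) = D(T) × D(T*) by S(x, y) = (T*y, Tx). Then S is densely defined and symmetric, and its adjoint S* has domain D(T̄) × D(T*) and is given by S*(x, y) = (T*y, T̄x). -/
section Block

variable {E F : Type*}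
  [NormedAddCommGroup E] [InnerProductSpace ℂ E]
  [NormedAddCommGroup F] [InnerProductSpace ℂ F]

namespace LinearPMap

/-- The off-diagonal block operator `(x, y) ↦ (B y, A x)` on the Hilbert space
`WithLp 2 (E × F)` (the product `E × F` with the inner product
`⟨(x₁,y₁),(x₂,y₂)⟩ = ⟨x₁,x₂⟩ + ⟨y₁,y₂⟩`), with domain `D(A) × D(B)`. -/
noncomputable def blockOffDiag (A : E →ₗ.[ℂ] F) (B : F →ₗ.[ℂ] E) :
    WithLp 2 (E × F) →ₗ.[ℂ] WithLp 2 (E × F) where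
  domain := (A.domain.prod B.domain).comap (WithLp.linearEquiv 2 ℂ (E × F)).toLinearMap
  toFun :=
    (WithLp.linearEquiv 2 ℂ (E × F)).symm.toLinearMap.comp <|
      LinearMap.prod
        (B.toFun.comp <| LinearMap.codRestrict B.domain
          ((LinearMap.snd ℂ E F).comp ((WithLp.linearEquiv 2 ℂ (E × F)).toLinearMap.comp
            ((A.domain.prod B.domain).comap
              (WithLp.linearEquiv 2 ℂ (E × F)).toLinearMap).subtype))
          fun x => x.2.2)
        (A.toFun.comp <| LinearMap.codRestrict A.domain
          ((LinearMap.fst ℂ E F).comp ((WithLp.linearEquiv 2 ℂ (E × F)).toLinearMap.comp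
            ((A.domain.prod B.domain).comap
              (WithLp.linearEquiv 2 ℂ (E × F)).toLinearMap).subtype))
          fun x => x.2.1)

/-- The diagonal block operator `(x, y) ↦ (A x, C y)` on the Hilbert space
`WithLp 2 (E × F)`, with domain `D(A) × D(C)`. -/
noncomputable def blockDiag (A : E →ₗ.[ℂ] E) (C : F →ₗ.[ℂ] F) :
    WithLp 2 (E × F) →ₗ.[ℂ] WithLp 2 (E × F) where
  domain := (A.domain.prod C.domain).comap (WithLp.linearEquiv 2 ℂ (E × F)).toLinearMap
  toFun :=
    (WithLp.linearEquiv 2 ℂ (E × F)).symm.toLinearMap.comp <|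
      LinearMap.prod
        (A.toFun.comp <| LinearMap.codRestrict A.domain
          ((LinearMap.fst ℂ E F).comp ((WithLp.linearEquiv 2 ℂ (E × F)).toLinearMap.comp
            ((A.domain.prod C.domain).comap
              (WithLp.linearEquiv 2 ℂ (E × F)).toLinearMap).subtype))
          fun x => x.2.1)
        (C.toFun.comp <| LinearMap.codRestrict C.domain
          ((LinearMap.snd ℂ E F).comp ((WithLp.linearEquiv 2 ℂ (E × F)).toLinearMap.comp
            ((A.domain.prod C.domain).comap
              (WithLp.linearEquiv 2 ℂ (E × F)).toLinearMap).subtype))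
          fun x => x.2.2)

end LinearPMap

end Block

open scoped LinearPMap

/-! In Mathlib's language `(T†).graph = T.graph.adjoint`, where the adjoint of a subspace of
`E × F` is the orthogonal complement of its rotation `(x, y) ↦ (y, -x)`. Applying this twice gives
the double orthogonal complement of the graph, i.e. its closure, so `T†† = T.closure`; and `D(T†)`
is dense because `y ⊥ D(T†)` puts `(0, y)` in the graph of `T.closure`. For a block operator
`S = blockOffDiag A B`, testing `S†` against the vectors `(x, 0)` and `(0, y)` decouples the two
coordinates and gives `S† = blockOffDiag B† A†`; for `A = T`, `B = T†` this is
`blockOffDiag T.closure T†`. -/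
namespace Submodule

variable {𝕜 E F : Type*} [RCLike 𝕜]
  [NormedAddCommGroup E] [InnerProductSpace 𝕜 E] [NormedAddCommGroup F] [InnerProductSpace 𝕜 F]

open WithLp

theorem mem_adjoint_iff_toLp_mem_orthogonal (g : Submodule 𝕜 (E × F)) (x : F × E) :
    x ∈ g.adjoint ↔
      toLp 2 (-x.2, x.1) ∈ (g.comap (WithLp.linearEquiv 2 𝕜 (E × F)).toLinearMap)ᗮ := by
  simp only [mem_adjoint_iff, mem_orthogonal, mem_comap, LinearEquiv.coe_coe, coe_linearEquiv,
    prod_inner_apply, inner_neg_right]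
  constructor
  · intro h u hu
    linear_combination h _ _ hu
  · intro h a b hab
    linear_combination h (toLp 2 (a, b)) hab

theorem comap_ofLp_topologicalClosure (g : Submodule 𝕜 (E × F)) :
    (g.comap (WithLp.linearEquiv 2 𝕜 (E × F)).toLinearMap).topologicalClosure =
      g.topologicalClosure.comap (WithLp.linearEquiv 2 𝕜 (E × F)).toLinearMap :=
  SetLike.coe_injective ((homeomorphProd 2 E F).preimage_closure _).symm

theorem adjoint_adjoint [CompleteSpace E] [CompleteSpace F] (g : Submodule 𝕜 (E × F)) :
    g.adjoint.adjoint = g.topologicalClosure := by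
  ext x
  have hx : x ∈ g.topologicalClosure ↔
      toLp 2 x ∈ (g.comap (WithLp.linearEquiv 2 𝕜 (E × F)).toLinearMap)ᗮᗮ := by
    rw [orthogonal_orthogonal_eq_closure, comap_ofLp_topologicalClosure]
    exact Iff.rfl
  rw [hx, mem_adjoint_iff, mem_orthogonal]
  simp only [mem_adjoint_iff_toLp_mem_orthogonal, prod_inner_apply]
  constructor
  · intro h w hw
    have := h (ofLp w).2 (-(ofLp w).1) (by rwa [neg_neg])
    rw [inner_neg_left] at this
    linear_combination -this
  · intro h a b hab
    have := h _ hab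
    simp only [inner_neg_left] at this
    linear_combination -this

end Submodule

namespace LinearPMap

section Closure

variable {𝕜 E F : Type*} [RCLike 𝕜]
  [NormedAddCommGroup E] [InnerProductSpace 𝕜 E] [NormedAddCommGroup F] [InnerProductSpace 𝕜 F]
  [CompleteSpace E] [CompleteSpace F] {T : E →ₗ.[𝕜] F}

theorem adjoint_graph_adjoint_eq_closure_graph (hT : Dense (T.domain : Set E))
    (hcl : T.IsClosable) : T†.graph.adjoint = T.closure.graph := by
  rw [adjoint_graph_eq_graph_adjoint hT, Submodule.adjoint_adjoint,
    hcl.graph_closure_eq_closure_graph]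

theorem dense_adjoint_domain_of_isClosable (hT : Dense (T.domain : Set E))
    (hcl : T.IsClosable) : Dense (T†.domain : Set F) := by
  rw [Submodule.dense_iff_topologicalClosure_eq_top, ← Submodule.orthogonal_orthogonal_eq_closure,
    Submodule.orthogonal_eq_top_iff, Submodule.eq_bot_iff]
  intro y hy
  have hmem : ((0 : E), y) ∈ T.closure.graph := by
    rw [← adjoint_graph_adjoint_eq_closure_graph hT hcl, Submodule.mem_adjoint_iff]
    intro a b hab
    rw [inner_zero_right, zero_sub, neg_eq_zero]
    exact hy a (mem_domain_of_mem_graph hab)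
  exact T.closure.graph_fst_eq_zero_snd hmem rfl

theorem adjoint_adjoint_eq_closure (hT : Dense (T.domain : Set E)) (hcl : T.IsClosable) :
    T†† = T.closure :=
  eq_of_eq_graph <| by
    rw [adjoint_graph_eq_graph_adjoint (dense_adjoint_domain_of_isClosable hT hcl),
      adjoint_graph_adjoint_eq_closure_graph hT hcl]

end Closure

section Block

open WithLp

variable {E F : Type*}
  [NormedAddCommGroup E] [InnerProductSpace ℂ E] [NormedAddCommGroup F] [InnerProductSpace ℂ F]
  {A A' : E →ₗ.[ℂ] F} {B B' : F →ₗ.[ℂ] E}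

theorem blockOffDiag_apply (z : (A.blockOffDiag B).domain) :
    A.blockOffDiag B z = toLp 2 (B ⟨(ofLp (z : WithLp 2 (E × F))).2, z.2.2⟩,
      A ⟨(ofLp (z : WithLp 2 (E × F))).1, z.2.1⟩) :=
  rfl

theorem blockOffDiag_toLp_apply (x : A.domain) (y : B.domain) :
    A.blockOffDiag B ⟨toLp 2 ((x : E), (y : F)), x.2, y.2⟩ = toLp 2 (B y, A x) :=
  rfl

theorem dense_blockOffDiag_domain (hA : Dense (A.domain : Set E)) (hB : Dense (B.domain : Set F)) :
    Dense ((A.blockOffDiag B).domain : Set (WithLp 2 (E × F))) :=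
  (hA.prod hB).preimage (homeomorphProd 2 E F).isOpenMap

theorem IsFormalAdjoint.blockOffDiag (hA : A.IsFormalAdjoint B') (hB : B.IsFormalAdjoint A') :
    (A.blockOffDiag B).IsFormalAdjoint (A'.blockOffDiag B') := by
  intro u v
  simp only [blockOffDiag_apply, prod_inner_apply]
  linear_combination
    hB ⟨(ofLp (u : WithLp 2 (E × F))).2, u.2.2⟩ ⟨(ofLp (v : WithLp 2 (E × F))).1, v.2.1⟩ +
      hA ⟨(ofLp (u : WithLp 2 (E × F))).1, u.2.1⟩ ⟨(ofLp (v : WithLp 2 (E × F))).2, v.2.2⟩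

variable [CompleteSpace E] [CompleteSpace F]

theorem adjoint_blockOffDiag (hA : Dense (A.domain : Set E)) (hB : Dense (B.domain : Set F)) :
    (A.blockOffDiag B)† = B†.blockOffDiag A† := by
  have hS := dense_blockOffDiag_domain hA hB
  have hle : B†.blockOffDiag A† ≤ (A.blockOffDiag B)† :=
    ((adjoint_isFormalAdjoint hA).symm.blockOffDiag (adjoint_isFormalAdjoint hB).symm).le_adjoint hS
  refine (eq_of_le_of_domain_eq hle (le_antisymm hle.1 fun z hz => ?_)).symm
  have key (u : (A.blockOffDiag B).domain) := adjoint_isFormalAdjoint hS ⟨z, hz⟩ u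
  constructor
  · refine mem_adjoint_domain_of_exists _ ⟨(ofLp ((A.blockOffDiag B)† ⟨z, hz⟩)).2, fun y => ?_⟩
    have h := key ⟨toLp 2 (((0 : A.domain) : E), y), (0 : A.domain).2, y.2⟩
    rw [blockOffDiag_toLp_apply] at h
    simpa using h
  · refine mem_adjoint_domain_of_exists _ ⟨(ofLp ((A.blockOffDiag B)† ⟨z, hz⟩)).1, fun x => ?_⟩
    have h := key ⟨toLp 2 (x, ((0 : B.domain) : F)), x.2, (0 : B.domain).2⟩
    rw [blockOffDiag_toLp_apply] at h
    simpa using h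

end Block

end LinearPMap

theorem stmt_7 {E F : Type*}
    [NormedAddCommGroup E] [InnerProductSpace ℂ E] [CompleteSpace E]
    [NormedAddCommGroup F] [InnerProductSpace ℂ F] [CompleteSpace F]
    (T : E →ₗ.[ℂ] F)
    (hT : Dense (T.domain : Set E))
    (hcl : T.IsClosable) :
    Dense (((T.blockOffDiag T.adjoint).domain : Set (WithLp 2 (E × F)))) ∧
      T.blockOffDiag T.adjoint ≤ (T.blockOffDiag T.adjoint).adjoint ∧
      (T.blockOffDiag T.adjoint).adjoint = T.closure.blockOffDiag T.adjoint := by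
  have hT' := LinearPMap.dense_adjoint_domain_of_isClosable hT hcl
  have hS := LinearPMap.dense_blockOffDiag_domain hT hT'
  refine ⟨hS, ?_, ?_⟩
  · exact ((LinearPMap.adjoint_isFormalAdjoint hT).symm.blockOffDiag
      (LinearPMap.adjoint_isFormalAdjoint hT)).le_adjoint hS
  · rw [LinearPMap.adjoint_blockOffDiag hT hT', LinearPMap.adjoint_adjoint_eq_closure hT hcl]
end

section
/- Let H be a complex Hilbert space, let E be a dense proper linear subspace of H, and let u be a nonzero vector of H with u ∉ E. Let T be the operator with domain D(T) = E given by Tx = (⟨u, x⟩/‖u‖²)·u. Then the domain of TT* equals the orthogonal complement {u}ᗮ = {x ∈ H : ⟨u, x⟩ = 0}, and in particular D(TT*) is not dense in H. -/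
open scoped LinearPMap

theorem LinearPMap.mem_pcomp_toPMap_top_domain {R E F G : Type*} [CommRing R]
    [AddCommGroup E] [Module R E] [AddCommGroup F] [Module R F] [AddCommGroup G] [Module R G]
    (B : F →ₗ.[R] G) (A : E →ₗ[R] F) {x : E} :
    x ∈ (B.pcomp (A.toPMap ⊤)).domain ↔ A x ∈ B.domain := by
  simp [LinearPMap.mem_pcomp_domain]

section StarProjection

variable {𝕜 E : Type*} [RCLike 𝕜] [NormedAddCommGroup E] [InnerProductSpace 𝕜 E]

theorem Submodule.not_dense_orthogonal {K : Submodule 𝕜 E} (hK : K ≠ ⊥) :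
    ¬Dense (Kᗮ : Set E) := by
  rw [Submodule.dense_iff_topologicalClosure_eq_top,
    (Submodule.isClosed_orthogonal K).submodule_topologicalClosure_eq,
    Submodule.orthogonal_eq_top_iff]
  exact hK

theorem Submodule.starProjection_mem_iff_of_disjoint (K : Submodule 𝕜 E)
    [K.HasOrthogonalProjection] {p : Submodule 𝕜 E} (hKp : Disjoint K p) {x : E} :
    K.starProjection x ∈ p ↔ x ∈ Kᗮ := by
  rw [← Submodule.starProjection_apply_eq_zero_iff]
  exact ⟨fun hp => Submodule.disjoint_def.mp hKp _ (K.starProjection_apply_mem x) hp,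
    fun h => h ▸ p.zero_mem⟩

variable [CompleteSpace E]

theorem Submodule.starProjection_toPMap_adjoint (K : Submodule 𝕜 E) [K.HasOrthogonalProjection]
    {p : Submodule 𝕜 E} (hp : Dense (p : Set E)) :
    (K.starProjection.toPMap p)† = K.starProjection.toPMap ⊤ := by
  rw [ContinuousLinearMap.toPMap_adjoint_eq_adjoint_toPMap_of_dense _ hp,
    (isSelfAdjoint_starProjection K).adjoint_eq]

end StarProjection

theorem stmt_11_general {H : Type*} [NormedAddCommGroup H] [InnerProductSpace ℂ H] [CompleteSpace H]
    (E : Submodule ℂ H) (hEdense : Dense (E : Set H))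
    (u : H) (hu : u ≠ 0) (huE : u ∉ E)
    (T : H →ₗ.[ℂ] H) (hdom : T.domain = E)
    (hTval : ∀ x : T.domain, T x = ((inner ℂ u (x : H) : ℂ) / ((‖u‖ : ℂ) ^ 2)) • u) :
    (((T.pcomp T.adjoint).domain : Set H) = {x : H | (inner ℂ u x : ℂ) = 0}) ∧
      ¬Dense (((T.pcomp T.adjoint).domain : Set H)) := by
  set K := ℂ ∙ u
  have hT : T = K.starProjection.toPMap E := by
    refine LinearPMap.ext hdom fun x _ _ => ?_
    rw [hTval]
    change _ = K.starProjection x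
    rw [Submodule.starProjection_singleton]
    push_cast
    rfl
  have hdomain : (T.pcomp T†).domain = Kᗮ := by
    ext x
    rw [hT, K.starProjection_toPMap_adjoint hEdense, LinearPMap.mem_pcomp_toPMap_top_domain,
      LinearMap.toPMap_domain, ContinuousLinearMap.coe_coe,
      K.starProjection_mem_iff_of_disjoint ((Submodule.disjoint_span_singleton' hu).mpr huE).symm]
  have hperp : (Kᗮ : Set H) = {x : H | (inner ℂ u x : ℂ) = 0} :=
    Set.ext fun _ => Submodule.mem_orthogonal_singleton_iff_inner_right
  rw [hdomain]
  exact ⟨hperp, Submodule.not_dense_orthogonal (mt Submodule.span_singleton_eq_bot.mp hu)⟩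

theorem stmt_11 {H : Type*} [NormedAddCommGroup H] [InnerProductSpace ℂ H] [CompleteSpace H]
    (E : Submodule ℂ H) (hEdense : Dense (E : Set H)) (hEproper : E ≠ ⊤)
    (u : H) (hu : u ≠ 0) (huE : u ∉ E)
    (T : H →ₗ.[ℂ] H) (hdom : T.domain = E)
    (hTval : ∀ x : T.domain, T x = ((inner ℂ u (x : H) : ℂ) / ((‖u‖ : ℂ) ^ 2)) • u) :
    (((T.pcomp T.adjoint).domain : Set H) = {x : H | (inner ℂ u x : ℂ) = 0}) ∧
      ¬Dense (((T.pcomp T.adjoint).domain : Set H)) :=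
  stmt_11_general E hEdense u hu huE T hdom hTval
end
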